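/- In U_q(sl3), for every l ≥ 1: E_1 (\hat{F}_3[a])^l = (\hat{F}_3[a+1])^l E_1 + ((q^l - q^{-l})/(q - q^{-1})) F_2 (\hat{F}_3[a])^{l-1} (q^{a+2-l} K_1 K_2 - q^{-a-2+l}(K_1 K_2)^{-1})/(q - q^{-1}). -/

import Mathlib

noncomputable section

/-- The defining relations of `U_q(sl3)` inside an `ℝ`-algebra `R`:
generators `E₁ E₂ F₁ F₂` and `K₁ K₂` with inverses `K₁' K₂'`. -/
structure UqSL3 (R : Type*) [Ring R] [Algebra ℝ R] (q : ℝ)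
    (E₁ E₂ F₁ F₂ K₁ K₁' K₂ K₂' : R) : Prop where
  K₁mul : K₁ * K₁' = 1
  K₁mul' : K₁' * K₁ = 1
  K₂mul : K₂ * K₂' = 1
  K₂mul' : K₂' * K₂ = 1
  Kcomm : K₁ * K₂ = K₂ * K₁
  Kcomm' : K₁ * K₂' = K₂' * K₁
  Kcomm'' : K₁' * K₂ = K₂ * K₁'
  KE11 : K₁ * E₁ = (q ^ (2:ℤ)) • (E₁ * K₁)
  KE12 : K₁ * E₂ = (q ^ (-1:ℤ)) • (E₂ * K₁)
  KE21 : K₂ * E₁ = (q ^ (-1:ℤ)) • (E₁ * K₂)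
  KE22 : K₂ * E₂ = (q ^ (2:ℤ)) • (E₂ * K₂)
  KF11 : K₁ * F₁ = (q ^ (-2:ℤ)) • (F₁ * K₁)
  KF12 : K₁ * F₂ = (q ^ (1:ℤ)) • (F₂ * K₁)
  KF21 : K₂ * F₁ = (q ^ (1:ℤ)) • (F₁ * K₂)
  KF22 : K₂ * F₂ = (q ^ (-2:ℤ)) • (F₂ * K₂)
  EF11 : E₁ * F₁ - F₁ * E₁ = (q - q⁻¹)⁻¹ • (K₁ - K₁')
  EF22 : E₂ * F₂ - F₂ * E₂ = (q - q⁻¹)⁻¹ • (K₂ - K₂')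
  EF12 : E₁ * F₂ = F₂ * E₁
  EF21 : E₂ * F₁ = F₁ * E₂
  serreE₁ : E₁ ^ 2 * E₂ - (q + q⁻¹) • (E₁ * E₂ * E₁) + E₂ * E₁ ^ 2 = 0
  serreE₂ : E₂ ^ 2 * E₁ - (q + q⁻¹) • (E₂ * E₁ * E₂) + E₁ * E₂ ^ 2 = 0
  serreF₁ : F₁ ^ 2 * F₂ - (q + q⁻¹) • (F₁ * F₂ * F₁) + F₂ * F₁ ^ 2 = 0
  serreF₂ : F₂ ^ 2 * F₁ - (q + q⁻¹) • (F₂ * F₁ * F₂) + F₁ * F₂ ^ 2 = 0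

/-- `F̂₃[a] = F₁F₂ (q^{a+1}K₂ - q^{-a-1}K₂⁻¹)/(q-q⁻¹) - F₂F₁ (q^a K₂ - q^{-a}K₂⁻¹)/(q-q⁻¹)`. -/
def hatF₃ {R : Type*} [Ring R] [Algebra ℝ R] (q a : ℝ) (F₁ F₂ K₂ K₂' : R) : R :=
  (q - q⁻¹)⁻¹ • (F₁ * F₂ * (q ^ (a + 1) • K₂ - q ^ (-(a + 1)) • K₂')
    - F₂ * F₁ * (q ^ a • K₂ - q ^ (-a) • K₂'))

/-!
Write `H = F̂₃[a]`, `G = F̂₃[a+1]`, `K = K₁K₂` and `[K; b] = (q^b K - q^{-b} K⁻¹)/(q - q⁻¹)`.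
Besides the one-step relations `E₁ H = G E₁ + F₂ [K; a+1]` and `F₂ H = G F₂`, the induction
needs only that `F₁` and `F₂` both have weight `q⁻¹` for `K`, so that `H` has weight `q⁻²` and
`[K; b] H = H [K; b-2]`. Pushing `E₁` through `H^(n+1)` then leaves `G^(n+1) E₁` plus
`F₂ H^n` times a combination of brackets, which the q-integer recurrences
`[n+1] = q [n] + q^{-n} = q⁻¹ [n] + q^n` collapse to `[n+1] [K; a+1-n]`.
-/

def QCommute {R : Type*} [Ring R] [Algebra ℝ R] (c : ℝ) (K X : R) : Prop :=
  K * X = c • (X * K)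

namespace QCommute

variable {R : Type*} [Ring R] [Algebra ℝ R] {c d : ℝ} {K K' X Y : R}

protected theorem eq (h : QCommute c K X) : K * X = c • (X * K) := h

theorem left_comm (h : QCommute c K X) (y : R) : K * (X * y) = c • (X * (K * y)) := by
  rw [← mul_assoc, h, smul_mul_assoc, mul_assoc]

theorem of_commute (h : Commute K X) : QCommute 1 K X := by
  rw [QCommute, h.eq, one_smul]

theorem mul_right (hX : QCommute c K X) (hY : QCommute d K Y) : QCommute (c * d) K (X * Y) := by
  rw [QCommute, ← mul_assoc, hX, smul_mul_assoc, mul_assoc, hY, mul_smul_comm, smul_smul,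
    ← mul_assoc]

theorem mul_left (hK : QCommute c K X) (hK' : QCommute d K' X) : QCommute (c * d) (K * K') X := by
  rw [QCommute, mul_assoc, hK', mul_smul_comm, ← mul_assoc, hK, smul_mul_assoc, smul_smul,
    mul_assoc, mul_comm c]

theorem smul_right (h : QCommute c K X) (r : ℝ) : QCommute c K (r • X) := by
  rw [QCommute, mul_smul_comm, h, smul_mul_assoc, smul_comm]

theorem sub_right (hX : QCommute c K X) (hY : QCommute c K Y) : QCommute c K (X - Y) := by
  rw [QCommute, mul_sub, sub_mul, hX, hY, smul_sub]

theorem pow_right (h : QCommute c K X) (n : ℕ) : QCommute (c ^ n) K (X ^ n) := by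
  induction n with
  | zero => simpa using of_commute (Commute.one_right K)
  | succ n ih => rw [pow_succ, pow_succ]; exact ih.mul_right h

theorem symm (hc : c ≠ 0) (h : QCommute c K X) : QCommute c⁻¹ X K := by
  rw [QCommute, h, smul_smul, inv_mul_cancel₀ hc, one_smul]

theorem inv_left (hc : c ≠ 0) (h₁ : K * K' = 1) (h₂ : K' * K = 1) (h : QCommute c K X) :
    QCommute c⁻¹ K' X := by
  have key : c • (K' * X) = X * K' := by
    calc c • (K' * X) = K' * (c • (X * K)) * K' := by
          rw [mul_smul_comm, smul_mul_assoc, mul_assoc, mul_assoc, h₁, mul_one]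
      _ = X * K' := by rw [← h, ← mul_assoc, h₂, one_mul]
  rw [QCommute, ← key, smul_smul, inv_mul_cancel₀ hc, one_smul]

end QCommute

def qInt (q : ℝ) (n : ℕ) : ℝ := (q ^ (n : ℤ) - q ^ (-(n : ℤ))) / (q - q⁻¹)

theorem qInt_one {q : ℝ} (hq : q - q⁻¹ ≠ 0) : qInt q 1 = 1 := by
  simp [qInt, div_self hq]

def qBracket {R : Type*} [Ring R] [Algebra ℝ R] (q b : ℝ) (K K' : R) : R :=
  (q - q⁻¹)⁻¹ • (q ^ b • K - q ^ (-b) • K')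

section qBracket

variable {R : Type*} [Ring R] [Algebra ℝ R] {q : ℝ} {K K' X : R}

theorem qBracket_mul_of_qCommute (hq : 0 < q) {c : ℝ} (hK : QCommute (q ^ (-c)) K X)
    (hK' : QCommute (q ^ c) K' X) (b : ℝ) :
    qBracket q b K K' * X = X * qBracket q (b - c) K K' := by
  simp only [qBracket, smul_mul_assoc, sub_mul, smul_sub]
  rw [hK.eq, hK'.eq]
  simp only [mul_sub, mul_smul_comm, smul_smul, ← Real.rpow_add hq]
  ring_nf

theorem qBracket_mul_pow_of_qCommute (hq : 0 < q) {c : ℝ} (hK : QCommute (q ^ (-c)) K X)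
    (hK' : QCommute (q ^ c) K' X) (b : ℝ) (n : ℕ) :
    qBracket q b K K' * X ^ n = X ^ n * qBracket q (b - c * n) K K' := by
  apply qBracket_mul_of_qCommute hq
  · simpa [← Real.rpow_mul_natCast hq.le] using hK.pow_right n
  · simpa [← Real.rpow_mul_natCast hq.le] using hK'.pow_right n

theorem qInt_smul_qBracket_add_qBracket (hq : 0 < q) (b : ℝ) (n : ℕ) :
    qInt q n • qBracket q (b + 1) K K' + qBracket q (b - n) K K'
      = qInt q (n + 1) • qBracket q b K K' := by
  simp only [qBracket, qInt, Real.rpow_add hq, Real.rpow_sub hq, Real.rpow_neg hq.le, Real.rpow_one,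
    Real.rpow_natCast, zpow_neg, zpow_natCast, smul_sub, smul_smul]
  match_scalars <;> field_simp <;> ring

variable {E F G H : R}

theorem mul_pow_succ_eq_of_qCommute (hq : 0 < q) (hqq : q - q⁻¹ ≠ 0) {a : ℝ}
    (hEH : E * H = G * E + F * qBracket q (a + 1) K K') (hFH : F * H = G * F)
    (hK : QCommute (q ^ (-2 : ℝ)) K H) (hK' : QCommute (q ^ (2 : ℝ)) K' H) (n : ℕ) :
    E * H ^ (n + 1)
      = G ^ (n + 1) * E + qInt q (n + 1) • (F * H ^ n * qBracket q (a + 1 - n) K K') := by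
  induction n with
  | zero => simp [hEH, qInt_one hqq]
  | succ n ih =>
    have hW : qBracket q (a + 1) K K' * H ^ (n + 1)
        = H ^ (n + 1) * qBracket q (a - n - (n + 1 : ℕ)) K K' := by
      rw [qBracket_mul_pow_of_qCommute hq hK hK']
      congr 2
      push_cast
      ring
    have hGF : G * (F * H ^ n) = F * H ^ (n + 1) := by
      rw [← mul_assoc, ← hFH, mul_assoc, ← pow_succ']
    calc E * H ^ (n + 1 + 1)
        = G * (E * H ^ (n + 1)) + F * (qBracket q (a + 1) K K' * H ^ (n + 1)) := by
          rw [pow_succ' H (n + 1), ← mul_assoc, hEH, add_mul, mul_assoc, mul_assoc]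
      _ = G ^ (n + 1 + 1) * E + F * H ^ (n + 1) * (qInt q (n + 1) • qBracket q (a - n + 1) K K'
            + qBracket q (a - n - (n + 1 : ℕ)) K K') := by
          rw [ih, hW, mul_add, mul_smul_comm, ← mul_assoc G (F * H ^ n), hGF, ← mul_assoc G,
            ← pow_succ', add_sub_right_comm, add_assoc, mul_add, mul_smul_comm, mul_assoc F,
            mul_assoc F]
      _ = _ := by
          rw [qInt_smul_qBracket_add_qBracket hq, mul_smul_comm]
          congr 4
          push_cast
          ring

end qBracket

section UqSL3

variable {R : Type*} [Ring R] [Algebra ℝ R] {q : ℝ} {E₁ E₂ F₁ F₂ K₁ K₁' K₂ K₂' : R}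

theorem UqSL3.hatF₃_qCommute (hq : 0 < q) (h : UqSL3 R q E₁ E₂ F₁ F₂ K₁ K₁' K₂ K₂') (a : ℝ) :
    QCommute (q ^ (-2 : ℝ)) (K₁ * K₂) (hatF₃ q a F₁ F₂ K₂ K₂') := by
  have hw : ∀ m n : ℤ, m + n = -1 → q ^ m * q ^ n = q⁻¹ := fun m n hmn => by
    rw [← zpow_add₀ hq.ne', hmn, zpow_neg_one]
  have hF₁ : QCommute q⁻¹ (K₁ * K₂) F₁ :=
    hw (-2) 1 (by norm_num) ▸ QCommute.mul_left h.KF11 h.KF21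
  have hF₂ : QCommute q⁻¹ (K₁ * K₂) F₂ :=
    hw 1 (-2) (by norm_num) ▸ QCommute.mul_left h.KF12 h.KF22
  have hK₂ : QCommute 1 (K₁ * K₂) K₂ :=
    .of_commute (Commute.mul_left h.Kcomm (Commute.refl K₂))
  have hK₂' : QCommute 1 (K₁ * K₂) K₂' :=
    .of_commute (Commute.mul_left h.Kcomm' (h.K₂mul.trans h.K₂mul'.symm))
  have hX : ∀ b c : ℝ, QCommute 1 (K₁ * K₂) (b • K₂ - c • K₂') := fun b c =>
    (hK₂.smul_right b).sub_right (hK₂'.smul_right c)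
  have hweight : q⁻¹ * q⁻¹ * 1 = q ^ (-2 : ℝ) := by
    rw [Real.rpow_neg hq.le, Real.rpow_two]; ring
  exact hweight ▸ (((hF₁.mul_right hF₂).mul_right (hX _ _)).sub_right
    ((hF₂.mul_right hF₁).mul_right (hX _ _))).smul_right _

theorem UqSL3.hatF₃_qCommute_inv (hq : 0 < q) (h : UqSL3 R q E₁ E₂ F₁ F₂ K₁ K₁' K₂ K₂')
    (a : ℝ) : QCommute (q ^ (2 : ℝ)) (K₂' * K₁') (hatF₃ q a F₁ F₂ K₂ K₂') := by
  have h₁ : K₁ * K₂ * (K₂' * K₁') = 1 := by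
    rw [mul_assoc, ← mul_assoc K₂, h.K₂mul, one_mul, h.K₁mul]
  have h₂ : K₂' * K₁' * (K₁ * K₂) = 1 := by
    rw [mul_assoc, ← mul_assoc K₁', h.K₁mul', one_mul, h.K₂mul']
  have := (h.hatF₃_qCommute hq a).inv_left (by positivity) h₁ h₂
  rwa [Real.rpow_neg hq.le, inv_inv] at this

theorem UqSL3.F₂_mul_hatF₃ (hq : 0 < q) (h : UqSL3 R q E₁ E₂ F₁ F₂ K₁ K₁' K₂ K₂') (a : ℝ) :
    F₂ * hatF₃ q a F₁ F₂ K₂ K₂' = hatF₃ q (a + 1) F₁ F₂ K₂ K₂' * F₂ := by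
  have hK₂ : QCommute (q ^ (-2 : ℤ)) K₂ F₂ := h.KF22
  have hK₂' : QCommute (q ^ (-2 : ℤ))⁻¹ K₂' F₂ :=
    hK₂.inv_left (by positivity) h.K₂mul h.K₂mul'
  have serre (x : R) : F₂ * (F₂ * (F₁ * x))
      = (q + q⁻¹) • (F₂ * (F₁ * (F₂ * x))) - F₁ * (F₂ * (F₂ * x)) := by
    have := congrArg (· * x) h.serreF₂
    simp only [sub_mul, add_mul, smul_mul_assoc, mul_assoc, sq, zero_mul] at this
    rw [← sub_eq_zero, ← this]
    abel
  simp only [hatF₃, mul_sub, sub_mul, smul_sub, smul_mul_assoc, mul_smul_comm, smul_smul,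
    mul_assoc, serre, hK₂.eq, hK₂'.eq]
  match_scalars <;>
    simp only [Real.rpow_add hq, Real.rpow_neg hq.le, Real.rpow_one, zpow_neg] <;>
    field_simp <;> ring

theorem UqSL3.E₁_mul_hatF₃ (hq : 0 < q) (hqq : q - q⁻¹ ≠ 0)
    (h : UqSL3 R q E₁ E₂ F₁ F₂ K₁ K₁' K₂ K₂') (a : ℝ) :
    E₁ * hatF₃ q a F₁ F₂ K₂ K₂'
      = hatF₃ q (a + 1) F₁ F₂ K₂ K₂' * E₁ + F₂ * qBracket q (a + 1) (K₁ * K₂) (K₂' * K₁') := by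
  have hEF₁ (x : R) : E₁ * (F₁ * x)
      = F₁ * (E₁ * x) + (q - q⁻¹)⁻¹ • (K₁ * x) - (q - q⁻¹)⁻¹ • (K₁' * x) := by
    rw [← mul_assoc, ← sub_add_cancel (E₁ * F₁) (F₁ * E₁), h.EF11]
    simp only [add_mul, sub_mul, smul_mul_assoc, smul_sub, mul_assoc]
    abel
  have hEF₂ : Commute E₁ F₂ := h.EF12
  have hKE : QCommute (q ^ (-1 : ℤ)) K₂ E₁ := h.KE21
  have hEK₂ := hKE.symm (by positivity)
  have hEK₂' := (hKE.inv_left (by positivity) h.K₂mul h.K₂mul').symm (by positivity)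
  have hKF : QCommute (q ^ (1 : ℤ)) K₁ F₂ := h.KF12
  have hK'F := hKF.inv_left (by positivity) h.K₁mul h.K₁mul'
  have hKK' := (QCommute.of_commute (h.Kcomm' : Commute K₁ K₂')).inv_left one_ne_zero
    h.K₁mul h.K₁mul'
  simp only [hatF₃, qBracket, mul_sub, sub_mul, mul_add, smul_sub, smul_mul_assoc,
    mul_smul_comm, smul_smul, mul_assoc, hEF₁, hEF₂.left_comm, hEK₂.eq, hEK₂'.eq,
    hKF.left_comm, hK'F.left_comm, hKK'.eq]
  have hq2 : q ^ 2 - 1 ≠ 0 := by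
    rwa [show q ^ 2 - 1 = q * (q - q⁻¹) by field_simp, mul_ne_zero_iff_left hq.ne']
  match_scalars <;>
    simp only [Real.rpow_add hq, Real.rpow_neg hq.le, Real.rpow_one, zpow_neg] <;>
    field_simp <;> ring

end UqSL3

theorem stmt {R : Type*} [Ring R] [Algebra ℝ R] (q : ℝ) (hq0 : 0 < q) (hq1 : q < 1)
    (E₁ E₂ F₁ F₂ K₁ K₁' K₂ K₂' : R)
    (h : UqSL3 R q E₁ E₂ F₁ F₂ K₁ K₁' K₂ K₂') (a : ℝ) (l : ℕ) (hl : 1 ≤ l) :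
    E₁ * (hatF₃ q a F₁ F₂ K₂ K₂') ^ l
      = (hatF₃ q (a + 1) F₁ F₂ K₂ K₂') ^ l * E₁
        + ((q ^ (l:ℤ) - q ^ (-(l:ℤ))) / (q - q⁻¹)) •
          (F₂ * (hatF₃ q a F₁ F₂ K₂ K₂') ^ (l - 1) *
            ((q - q⁻¹)⁻¹ • (q ^ (a + 2 - l) • (K₁ * K₂) - q ^ (-(a + 2 - l)) • (K₂' * K₁')))) := by
  have hqq : q - q⁻¹ ≠ 0 := (sub_neg.mpr (hq1.trans ((one_lt_inv₀ hq0).mpr hq1))).ne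
  obtain ⟨n, rfl⟩ := Nat.exists_eq_add_of_le' hl
  rw [Nat.add_sub_cancel, show a + 2 - ((n + 1 : ℕ) : ℝ) = a + 1 - n by push_cast; ring]
  exact mul_pow_succ_eq_of_qCommute hq0 hqq (h.E₁_mul_hatF₃ hq0 hqq a) (h.F₂_mul_hatF₃ hq0 a)
    (h.hatF₃_qCommute hq0 a) (h.hatF₃_qCommute_inv hq0 a) n
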